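/- Let Γ be a nonempty parameter-bounded family of Hénon-form maps and let γ = (γ_j)_{j∈ℤ} be a sequence with all γ_j ∈ Γ. Then I_γ⁺ ∪ K_γ⁺ = ℂ² and I_γ⁺ ∩ K_γ⁺ = ∅, and likewise I_γ⁻ ∪ K_γ⁻ = ℂ² and I_γ⁻ ∩ K_γ⁻ = ∅. In other words, for every z ∈ ℂ² the forward orbit (γ_{n−1}∘⋯∘γ₀(z))_{n≥1} is either bounded or tends to infinity in norm, and similarly for the backward orbit under the inverse maps. -/

import Mathlib

open Complex Filter Set Topology MeasureTheory Bornology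

noncomputable section

/-- A Hénon-form map `f(x,y) = (y + a, p(y) - δ x)` with `δ ≠ 0` and `deg p ≥ 2`. -/
structure HenonMap : Type where
  a : ℂ
  δ : ℂ
  p : Polynomial ℂ
  hδ : δ ≠ 0
  hdeg : 2 ≤ p.natDegree

namespace HenonMap

/-- The map itself. -/
def toFun (f : HenonMap) (z : ℂ × ℂ) : ℂ × ℂ :=
  (z.2 + f.a, f.p.eval z.2 - f.δ * z.1)

/-- The inverse map `f⁻¹(x,y) = (δ⁻¹ (p(x - a) - y), x - a)`. -/
def invFun (f : HenonMap) (z : ℂ × ℂ) : ℂ × ℂ :=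
  (f.δ⁻¹ * (f.p.eval (z.1 - f.a) - z.2), z.1 - f.a)

end HenonMap

/-- `V_R⁺ = {(x,y) : max(R,|x|) < |y|}`. -/
def VPlus (R : ℝ) : Set (ℂ × ℂ) := {z | max R (‖z.1‖) < ‖z.2‖}

/-- `V_R⁻ = {(x,y) : max(R,|y|) < |x|}`. -/
def VMinus (R : ℝ) : Set (ℂ × ℂ) := {z | max R (‖z.2‖) < ‖z.1‖}

/-- `D_R = {(x,y) : max(|x|,|y|) < R}`. -/
def DDisk (R : ℝ) : Set (ℂ × ℂ) := {z | max (‖z.1‖) (‖z.2‖) < R}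

/-- Condition (A) for `(R, ρ)`. -/
def CondA (f : HenonMap) (R ρ : ℝ) : Prop :=
  (∀ z ∈ closure (VPlus R),
    f.toFun z ∈ VPlus R ∧ ρ * ‖z.2‖ < ‖(f.toFun z).2‖) ∧
  (∀ z ∈ closure (VMinus R),
    f.invFun z ∈ VMinus R ∧ ρ * ‖z.1‖ < ‖(f.invFun z).1‖)

/-- A parameter-bounded family of Hénon-form maps. -/
def ParamBounded (Γ : Set HenonMap) : Prop :=
  ∃ (D : ℕ) (A d₀ Δ m M : ℝ),
    2 ≤ D ∧ 0 ≤ A ∧ 0 < d₀ ∧ d₀ ≤ Δ ∧ 0 < m ∧ m ≤ M ∧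
    ∀ f ∈ Γ,
      f.p.natDegree ≤ D ∧ ‖f.a‖ ≤ A ∧
      d₀ ≤ ‖f.δ‖ ∧ ‖f.δ‖ ≤ Δ ∧
      (∀ i : ℕ, ‖f.p.coeff i‖ ≤ M) ∧
      m ≤ ‖f.p.leadingCoeff‖

/-- Forward composition: `fwd γ n = γ_{n-1} ∘ ⋯ ∘ γ₀`. -/
def fwd (γ : ℤ → HenonMap) : ℕ → (ℂ × ℂ) → ℂ × ℂ
  | 0 => id
  | n + 1 => fun z => (γ (n : ℤ)).toFun (fwd γ n z)

/-- Backward composition: `bwd γ n = γ_{-n}⁻¹ ∘ ⋯ ∘ γ_{-1}⁻¹`. -/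
def bwd (γ : ℤ → HenonMap) : ℕ → (ℂ × ℂ) → ℂ × ℂ
  | 0 => id
  | n + 1 => fun z => (γ (-((n : ℤ) + 1))).invFun (bwd γ n z)

/-- `K_γ⁺` : points with bounded forward orbit. -/
def KPlus (γ : ℤ → HenonMap) : Set (ℂ × ℂ) :=
  {z | IsBounded (Set.range fun n : ℕ => fwd γ n z)}

/-- `K_γ⁻` : points with bounded backward orbit. -/
def KMinus (γ : ℤ → HenonMap) : Set (ℂ × ℂ) :=
  {z | IsBounded (Set.range fun n : ℕ => bwd γ n z)}

/-- `I_γ⁺` : points whose forward orbit tends to infinity in norm. -/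
def IPlus (γ : ℤ → HenonMap) : Set (ℂ × ℂ) :=
  {z | Tendsto (fun n : ℕ => ‖fwd γ n z‖) atTop atTop}

/-- `I_γ⁻` : points whose backward orbit tends to infinity in norm. -/
def IMinus (γ : ℤ → HenonMap) : Set (ℂ × ℂ) :=
  {z | Tendsto (fun n : ℕ => ‖bwd γ n z‖) atTop atTop}

/-- The iterated shift: `(σⁿ γ)_j = γ_{j+n}`. -/
def shiftIter (γ : ℤ → HenonMap) (n : ℕ) : ℤ → HenonMap := fun j => γ (j + n)

/-- `log⁺ t = max (log t) 0`. -/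
def logPlus (t : ℝ) : ℝ := max (Real.log t) 0

/-- `G_{γ,n}⁺(z) = (deg γ_{n-1} ⋯ deg γ₀)⁻¹ log⁺ ‖γ_{n-1} ∘ ⋯ ∘ γ₀ (z)‖`. -/
def GPlusN (γ : ℤ → HenonMap) (n : ℕ) (z : ℂ × ℂ) : ℝ :=
  (∏ j ∈ Finset.range n, ((γ (j : ℤ)).p.natDegree : ℝ))⁻¹ * logPlus ‖fwd γ n z‖

/-- `G_{γ,n}⁻(z) = (deg γ_{-1} ⋯ deg γ_{-n})⁻¹ log⁺ ‖γ_{-n}⁻¹ ∘ ⋯ ∘ γ_{-1}⁻¹ (z)‖`. -/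
def GMinusN (γ : ℤ → HenonMap) (n : ℕ) (z : ℂ × ℂ) : ℝ :=
  (∏ j ∈ Finset.range n, ((γ (-((j : ℤ) + 1))).p.natDegree : ℝ))⁻¹ * logPlus ‖bwd γ n z‖

/-! For `R` large, uniformly over a parameter-bounded family, every map sends the closed cone
`max R |x| ≤ |y|` into the open cone `V_R⁺` while more than doubling `|y|`, and every inverse does
the same for `V_R⁻` and `|x|` (Condition (A) with `ρ = 2`). So an orbit that enters `V_R⁺` escapes
to infinity geometrically. An orbit that never enters `V_R⁺` never meets its closure either, so
each of its points lies in the bidisk of radius `R` or in `V_R⁻`; read backwards from such a point,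
the orbit stays in `V_R⁻` with `|x|` growing, so the point is no larger than the initial one.
An orbit tending to infinity is never bounded. -/

open Polynomial

theorem Polynomial.le_norm_eval_of_one_le_norm {𝕜 : Type*} [NormedDivisionRing 𝕜] (p : 𝕜[X]) {M : ℝ}
    (hM : ∀ i, ‖p.coeff i‖ ≤ M) {u : 𝕜} (hu : 1 ≤ ‖u‖) :
    ‖p.leadingCoeff‖ * ‖u‖ ^ p.natDegree - p.natDegree * M * ‖u‖ ^ (p.natDegree - 1) ≤
      ‖p.eval u‖ := by
  have hM0 : 0 ≤ M := (norm_nonneg _).trans (hM 0)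
  have hlow : ‖∑ i ∈ Finset.range p.natDegree, p.coeff i * u ^ i‖ ≤
      p.natDegree * M * ‖u‖ ^ (p.natDegree - 1) := by
    calc ‖∑ i ∈ Finset.range p.natDegree, p.coeff i * u ^ i‖
        ≤ ∑ _i ∈ Finset.range p.natDegree, M * ‖u‖ ^ (p.natDegree - 1) := by
          refine norm_sum_le_of_le _ fun i hi => ?_
          rw [norm_mul, norm_pow]
          exact mul_le_mul (hM i)
            (pow_le_pow_right₀ hu (Nat.le_sub_one_of_lt (Finset.mem_range.1 hi)))
            (by positivity) hM0
      _ = p.natDegree * M * ‖u‖ ^ (p.natDegree - 1) := by simp [mul_assoc]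
  have htop : ‖p.coeff p.natDegree * u ^ p.natDegree‖ = ‖p.leadingCoeff‖ * ‖u‖ ^ p.natDegree := by
    rw [norm_mul, norm_pow]; rfl
  rw [eval_eq_sum_range, Finset.sum_range_succ, add_comm]
  linarith [norm_sub_le_norm_add (p.coeff p.natDegree * u ^ p.natDegree)
    (∑ i ∈ Finset.range p.natDegree, p.coeff i * u ^ i)]

theorem Polynomial.mul_norm_le_norm_eval {𝕜 : Type*} [NormedDivisionRing 𝕜] {p : 𝕜[X]}
    (hdeg : 2 ≤ p.natDegree) {M K : ℝ} (hM : ∀ i, ‖p.coeff i‖ ≤ M) (hK : 0 ≤ K) {u : 𝕜}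
    (hu : 1 ≤ ‖u‖) (hlead : p.natDegree * M + K ≤ ‖p.leadingCoeff‖ * ‖u‖) :
    K * ‖u‖ ≤ ‖p.eval u‖ := by
  obtain ⟨k, hk⟩ : ∃ k, p.natDegree = k + 2 := ⟨p.natDegree - 2, by omega⟩
  calc K * ‖u‖ ≤ K * ‖u‖ ^ (k + 1) := by gcongr; exact le_self_pow₀ hu (by omega)
    _ ≤ (‖p.leadingCoeff‖ * ‖u‖ - p.natDegree * M) * ‖u‖ ^ (k + 1) := by gcongr; linarith
    _ = ‖p.leadingCoeff‖ * ‖u‖ ^ p.natDegree - p.natDegree * M * ‖u‖ ^ (p.natDegree - 1) := by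
      rw [hk, show k + 2 - 1 = k + 1 by omega]; push_cast; ring
    _ ≤ ‖p.eval u‖ := p.le_norm_eval_of_one_le_norm hM hu

theorem closure_VPlus_subset (R : ℝ) : closure (VPlus R) ⊆ {z | max R ‖z.1‖ ≤ ‖z.2‖} :=
  closure_minimal (fun z (hz : max R ‖z.1‖ < ‖z.2‖) => hz.le)
    (isClosed_le (by fun_prop) (by fun_prop))

theorem subset_closure_VPlus {R : ℝ} (hR : 0 < R) :
    {z : ℂ × ℂ | max R ‖z.1‖ ≤ ‖z.2‖} ⊆ closure (VPlus R) := by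
  intro z (hz : max R ‖z.1‖ ≤ ‖z.2‖)
  have hy : 0 < ‖z.2‖ := hR.trans_le ((le_max_left _ _).trans hz)
  refine mem_closure_of_tendsto (f := fun t : ℝ => (z.1, t • z.2)) (b := 𝓝[>] 1) ?_ ?_
  · exact ((Continuous.prodMk continuous_const (continuous_id.smul continuous_const)).tendsto'
      1 z (by simp)).mono_left nhdsWithin_le_nhds
  · refine eventually_nhdsWithin_of_forall fun t (ht : 1 < t) => ?_
    show max R ‖z.1‖ < ‖t • z.2‖
    rw [norm_smul, Real.norm_of_nonneg (by linarith)]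
    nlinarith

theorem closure_VMinus_eq_preimage_swap (R : ℝ) :
    closure (VMinus R) = Prod.swap ⁻¹' closure (VPlus R) :=
  ((Homeomorph.prodComm ℂ ℂ).preimage_closure (VPlus R)).symm

theorem closure_VMinus_subset (R : ℝ) : closure (VMinus R) ⊆ {z | max R ‖z.2‖ ≤ ‖z.1‖} := by
  rw [closure_VMinus_eq_preimage_swap]
  exact fun _ hz => closure_VPlus_subset R hz

namespace HenonMap

theorem invFun_toFun (f : HenonMap) (z : ℂ × ℂ) : f.invFun (f.toFun z) = z := by
  have := f.hδ
  refine Prod.ext ?_ (add_sub_cancel_right _ _)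
  simp only [toFun, invFun, add_sub_cancel_right]
  field_simp
  ring

theorem toFun_invFun (f : HenonMap) (z : ℂ × ℂ) : f.toFun (f.invFun z) = z := by
  have := f.hδ
  refine Prod.ext (sub_add_cancel _ _) ?_
  simp only [toFun, invFun, sub_add_cancel]
  field_simp
  ring

variable {f : HenonMap} {A Δ R K : ℝ}

theorem toFun_mem_VPlus (ha : ‖f.a‖ ≤ A) (hδ : ‖f.δ‖ ≤ Δ) (hR : 1 ≤ R)
    (hK : Δ + A + 3 ≤ K) (hp : ∀ u, R / 2 ≤ ‖u‖ → K * ‖u‖ ≤ ‖f.p.eval u‖)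
    {z : ℂ × ℂ} (hz : max R ‖z.1‖ ≤ ‖z.2‖) :
    f.toFun z ∈ VPlus R ∧ 2 * ‖z.2‖ < ‖(f.toFun z).2‖ := by
  obtain ⟨hRy, hxy⟩ := max_le_iff.1 hz
  have hA : 0 ≤ A := (norm_nonneg _).trans ha
  have hy : 1 ≤ ‖z.2‖ := hR.trans hRy
  have hpy : (Δ + A + 3) * ‖z.2‖ ≤ ‖f.p.eval z.2‖ :=
    (mul_le_mul_of_nonneg_right hK (norm_nonneg _)).trans (hp _ (by linarith))
  have hδx : ‖f.δ * z.1‖ ≤ Δ * ‖z.2‖ := by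
    rw [norm_mul]; exact mul_le_mul hδ hxy (norm_nonneg _) ((norm_nonneg _).trans hδ)
  have hy' : (A + 3) * ‖z.2‖ ≤ ‖(f.toFun z).2‖ := by
    have := norm_sub_norm_le (f.p.eval z.2) (f.δ * z.1)
    change _ ≤ ‖f.p.eval z.2 - f.δ * z.1‖
    linarith
  have hx' : ‖(f.toFun z).1‖ ≤ ‖z.2‖ + A := (norm_add_le _ _).trans (by linarith)
  have hAy : A ≤ A * ‖z.2‖ := le_mul_of_one_le_right hA hy
  refine ⟨show max R _ < _ from max_lt ?_ ?_, ?_⟩ <;> nlinarith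

theorem invFun_mem_VMinus (ha : ‖f.a‖ ≤ A) (hδ : ‖f.δ‖ ≤ Δ) (hR : 2 * A + 2 ≤ R)
    (hK : 2 * (Δ * (A + 3) + 1) ≤ K) (hp : ∀ u, R / 2 ≤ ‖u‖ → K * ‖u‖ ≤ ‖f.p.eval u‖)
    {z : ℂ × ℂ} (hz : max R ‖z.2‖ ≤ ‖z.1‖) :
    f.invFun z ∈ VMinus R ∧ 2 * ‖z.1‖ < ‖(f.invFun z).1‖ := by
  obtain ⟨hRx, hyx⟩ := max_le_iff.1 hz
  have hA : 0 ≤ A := (norm_nonneg _).trans ha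
  have hΔ : 0 < Δ := (norm_pos_iff.2 f.hδ).trans_le hδ
  have hu_lo : ‖z.1‖ / 2 ≤ ‖z.1 - f.a‖ := by linarith [norm_sub_norm_le z.1 f.a]
  have hu_hi : ‖z.1 - f.a‖ ≤ ‖z.1‖ + A := (norm_sub_le _ _).trans (by linarith)
  have hpu : (Δ * (A + 3) + 1) * ‖z.1‖ ≤ ‖f.p.eval (z.1 - f.a)‖ :=
    calc (Δ * (A + 3) + 1) * ‖z.1‖ ≤ K * (‖z.1‖ / 2) := by nlinarith
      _ ≤ K * ‖z.1 - f.a‖ := mul_le_mul_of_nonneg_left hu_lo (le_trans (by positivity) hK)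
      _ ≤ ‖f.p.eval (z.1 - f.a)‖ := hp _ (by linarith)
  have hδx' : ‖f.δ‖ * ‖(f.invFun z).1‖ = ‖f.p.eval (z.1 - f.a) - z.2‖ := by
    rw [← norm_mul]
    congr 1
    exact mul_inv_cancel_left₀ f.hδ _
  have hx' : (A + 3) * ‖z.1‖ ≤ ‖(f.invFun z).1‖ := by
    have := norm_sub_norm_le (f.p.eval (z.1 - f.a)) z.2
    have := mul_le_mul_of_nonneg_right hδ (norm_nonneg (f.invFun z).1)
    nlinarith
  have hAx : A ≤ A * ‖z.1‖ := le_mul_of_one_le_right hA (by linarith)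
  refine ⟨show max R ‖z.1 - f.a‖ < _ from max_lt ?_ ?_, ?_⟩ <;> nlinarith

theorem condA_two (ha : ‖f.a‖ ≤ A) (hδ : ‖f.δ‖ ≤ Δ) (hR : 2 * A + 2 ≤ R)
    (hK₁ : Δ + A + 3 ≤ K) (hK₂ : 2 * (Δ * (A + 3) + 1) ≤ K)
    (hp : ∀ u, R / 2 ≤ ‖u‖ → K * ‖u‖ ≤ ‖f.p.eval u‖) : CondA f R 2 := by
  have hR₁ : 1 ≤ R := by linarith [(norm_nonneg _).trans ha]
  exact ⟨fun z hz => toFun_mem_VPlus ha hδ hR₁ hK₁ hp (closure_VPlus_subset R hz),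
    fun z hz => invFun_mem_VMinus ha hδ hR hK₂ hp (closure_VMinus_subset R hz)⟩

end HenonMap

theorem ParamBounded.exists_condA {Γ : Set HenonMap} (hΓ : ParamBounded Γ) :
    ∃ R, 0 < R ∧ ∀ f ∈ Γ, CondA f R 2 := by
  obtain ⟨D, A, d₀, Δ, m, M, -, hA, hd₀, hd₀Δ, hm, hmM, hbound⟩ := hΓ
  have hΔ : 0 ≤ Δ := hd₀.le.trans hd₀Δ
  have hM : 0 ≤ M := hm.le.trans hmM
  -- `K` serves both halves of Condition (A); `R` makes `deg p * M + K ≤ m * ‖u‖`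
  -- once `R / 2 ≤ ‖u‖`.
  set K := Δ + A + 3 + 2 * (Δ * (A + 3) + 1)
  have hK₁ : Δ + A + 3 ≤ K := le_add_of_nonneg_right (by positivity)
  have hK₂ : 2 * (Δ * (A + 3) + 1) ≤ K := le_add_of_nonneg_left (by positivity)
  set R := max (2 * A + 2) (2 * (D * M + K) / m)
  have hR : 2 * A + 2 ≤ R := le_max_left _ _
  have hmR : 2 * (D * M + K) ≤ m * R := by
    rw [← div_le_iff₀' hm]; exact le_max_right _ _
  refine ⟨R, by linarith, fun f hf => ?_⟩
  obtain ⟨hdeg, ha, -, hδ, hcoeff, hlead⟩ := hbound f hf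
  refine HenonMap.condA_two ha hδ hR hK₁ hK₂ fun u hu => ?_
  refine Polynomial.mul_norm_le_norm_eval f.hdeg hcoeff (by positivity) (by linarith) ?_
  have : (f.p.natDegree : ℝ) * M ≤ D * M := by gcongr
  nlinarith [mul_le_mul hlead hu (by linarith) (norm_nonneg _)]

theorem not_tendsto_norm_atTop_of_isBounded {α E : Type*} [SeminormedAddGroup E] {l : Filter α}
    [l.NeBot] {u : α → E} (h : IsBounded (range u)) : ¬Tendsto (fun n => ‖u n‖) l atTop := by
  obtain ⟨C, hC⟩ := isBounded_iff_forall_norm_le.1 h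
  intro ht
  obtain ⟨n, hn⟩ := (ht.eventually_gt_atTop C).exists
  exact (hC _ (mem_range_self n)).not_gt hn

section Filtration

variable {w : ℕ → ℂ × ℂ} {R ρ : ℝ}

theorem tendsto_norm_of_mem_VPlus (hρ : 1 < ρ)
    (hesc : ∀ n, w n ∈ closure (VPlus R) → w (n + 1) ∈ VPlus R ∧ ρ * ‖(w n).2‖ < ‖(w (n + 1)).2‖)
    {N : ℕ} (hN : w N ∈ VPlus R) : Tendsto (fun n => ‖w n‖) atTop atTop := by
  have hgrow : ∀ k, w (k + N) ∈ VPlus R ∧ ρ ^ k * ‖(w N).2‖ ≤ ‖(w (k + N)).2‖ := by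
    intro k
    induction k with
    | zero => simpa using hN
    | succ k ih =>
      obtain ⟨hmem, hnext⟩ := hesc _ (subset_closure ih.1)
      rw [add_right_comm]
      refine ⟨hmem, ?_⟩
      rw [pow_succ', mul_assoc]
      exact (mul_le_mul_of_nonneg_left ih.2 (by linarith)).trans hnext.le
  have hN₂ : 0 < ‖(w N).2‖ := (norm_nonneg _).trans_lt ((le_max_right _ _).trans_lt hN)
  refine (tendsto_add_atTop_iff_nat N).1 (tendsto_atTop_mono (fun k => ?_)
    ((tendsto_pow_atTop_atTop_of_one_lt hρ).atTop_mul_const hN₂))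
  exact (hgrow k).2.trans (norm_snd_le _)

theorem norm_fst_le_of_mem_VMinus (hρ : 1 ≤ ρ)
    (htrap : ∀ n, w (n + 1) ∈ closure (VMinus R) →
      w n ∈ VMinus R ∧ ρ * ‖(w (n + 1)).1‖ < ‖(w n).1‖) :
    ∀ n, w n ∈ VMinus R → ‖(w n).1‖ ≤ ‖(w 0).1‖
  | 0, _ => le_rfl
  | n + 1, hn => by
    obtain ⟨hmem, hprev⟩ := htrap n (subset_closure hn)
    have := le_mul_of_one_le_left (norm_nonneg (w (n + 1)).1) hρ
    linarith [norm_fst_le_of_mem_VMinus hρ htrap n hmem]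

theorem tendsto_or_isBounded_of_filtration (hR : 0 < R) (hρ : 1 < ρ)
    (hesc : ∀ n, w n ∈ closure (VPlus R) → w (n + 1) ∈ VPlus R ∧ ρ * ‖(w n).2‖ < ‖(w (n + 1)).2‖)
    (htrap : ∀ n, w (n + 1) ∈ closure (VMinus R) →
      w n ∈ VMinus R ∧ ρ * ‖(w (n + 1)).1‖ < ‖(w n).1‖) :
    Tendsto (fun n => ‖w n‖) atTop atTop ∨ IsBounded (range w) := by
  by_cases hescapes : ∃ N, w N ∈ VPlus R
  · obtain ⟨N, hN⟩ := hescapes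
    exact .inl (tendsto_norm_of_mem_VPlus hρ hesc hN)
  simp only [not_exists] at hescapes
  refine .inr (isBounded_iff_forall_norm_le.2 ⟨max R ‖w 0‖, forall_mem_range.2 fun n => ?_⟩)
  have hy : ‖(w n).2‖ < max R ‖(w n).1‖ :=
    not_le.1 fun h => hescapes (n + 1) (hesc n (subset_closure_VPlus hR h)).1
  rw [Prod.norm_def]
  by_cases hmin : w n ∈ VMinus R
  · have hx := norm_fst_le_of_mem_VMinus hρ.le htrap n hmin
    have hyx : ‖(w n).2‖ < ‖(w n).1‖ := (le_max_right _ _).trans_lt hmin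
    exact max_le (hx.trans ((norm_fst_le _).trans (le_max_right _ _)))
      (hyx.le.trans (hx.trans ((norm_fst_le _).trans (le_max_right _ _))))
  · have hx : ‖(w n).1‖ ≤ max R ‖(w n).2‖ := not_lt.1 hmin
    have : ‖(w n).1‖ ≤ R ∧ ‖(w n).2‖ ≤ R := by
      rcases lt_max_iff.1 hy with h | h <;> rcases le_max_iff.1 hx with h' | h' <;>
        constructor <;> linarith
    exact max_le (this.1.trans (le_max_left _ _)) (this.2.trans (le_max_left _ _))

end Filtration

section Orbits

theorem invFun_fwd_succ (γ : ℤ → HenonMap) (n : ℕ) (z : ℂ × ℂ) :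
    (γ n).invFun (fwd γ (n + 1) z) = fwd γ n z :=
  HenonMap.invFun_toFun _ _

theorem toFun_bwd_succ (γ : ℤ → HenonMap) (n : ℕ) (z : ℂ × ℂ) :
    (γ (-((n : ℤ) + 1))).toFun (bwd γ (n + 1) z) = bwd γ n z :=
  HenonMap.toFun_invFun _ _

variable {γ : ℤ → HenonMap} {R ρ : ℝ}

theorem IPlus_union_KPlus (hR : 0 < R) (hρ : 1 < ρ) (hA : ∀ j, CondA (γ j) R ρ) :
    IPlus γ ∪ KPlus γ = univ :=
  eq_univ_of_forall fun _ => tendsto_or_isBounded_of_filtration hR hρ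
    (fun n => (hA n).1 _)
    (fun n h => invFun_fwd_succ γ n _ ▸ (hA n).2 _ h)

theorem IMinus_union_KMinus (hR : 0 < R) (hρ : 1 < ρ) (hA : ∀ j, CondA (γ j) R ρ) :
    IMinus γ ∪ KMinus γ = univ := by
  refine eq_univ_of_forall fun z => ?_
  -- Swapping the coordinates exchanges `V_R⁺` and `V_R⁻`, so the swapped backward orbit is filtered
  -- exactly like a forward one.
  have := tendsto_or_isBounded_of_filtration (w := fun n => (bwd γ n z).swap) hR hρ
    (fun n h => (hA _).2 _ (by rwa [closure_VMinus_eq_preimage_swap]))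
    (fun n h => by
      rw [closure_VMinus_eq_preimage_swap, mem_preimage, Prod.swap_swap] at h
      exact toFun_bwd_succ γ n z ▸ (hA _).1 _ h)
  have hswap : ∀ v : ℂ × ℂ, ‖v.swap‖ = ‖v‖ := fun v => by
    rw [Prod.norm_def, Prod.norm_def, max_comm, Prod.fst_swap, Prod.snd_swap]
  show Tendsto (fun n => ‖bwd γ n z‖) atTop atTop ∨ IsBounded (range fun n => bwd γ n z)
  simpa only [hswap, isBounded_iff_forall_norm_le, forall_mem_range] using this

theorem IPlus_inter_KPlus (γ : ℤ → HenonMap) : IPlus γ ∩ KPlus γ = ∅ :=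
  eq_empty_of_forall_notMem fun z hz =>
    not_tendsto_norm_atTop_of_isBounded (u := (fwd γ · z)) hz.2 hz.1

theorem IMinus_inter_KMinus (γ : ℤ → HenonMap) : IMinus γ ∩ KMinus γ = ∅ :=
  eq_empty_of_forall_notMem fun z hz =>
    not_tendsto_norm_atTop_of_isBounded (u := (bwd γ · z)) hz.2 hz.1

end Orbits

theorem stmt_5_general (Γ : Set HenonMap) (hΓ : ParamBounded Γ)
    (γ : ℤ → HenonMap) (hγ : ∀ j : ℤ, γ j ∈ Γ) :
    IPlus γ ∪ KPlus γ = Set.univ ∧ IPlus γ ∩ KPlus γ = ∅ ∧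
    IMinus γ ∪ KMinus γ = Set.univ ∧ IMinus γ ∩ KMinus γ = ∅ := by
  obtain ⟨R, hR, hA⟩ := hΓ.exists_condA
  have hγA : ∀ j, CondA (γ j) R 2 := fun j => hA _ (hγ j)
  exact ⟨IPlus_union_KPlus hR one_lt_two hγA, IPlus_inter_KPlus γ,
    IMinus_union_KMinus hR one_lt_two hγA, IMinus_inter_KMinus γ⟩

/-- `I_γ± ∪ K_γ± = ℂ²` and `I_γ± ∩ K_γ± = ∅`. -/
theorem stmt_5 (Γ : Set HenonMap) (hne : Γ.Nonempty) (hΓ : ParamBounded Γ)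
    (γ : ℤ → HenonMap) (hγ : ∀ j : ℤ, γ j ∈ Γ) :
    IPlus γ ∪ KPlus γ = Set.univ ∧ IPlus γ ∩ KPlus γ = ∅ ∧
    IMinus γ ∪ KMinus γ = Set.univ ∧ IMinus γ ∩ KMinus γ = ∅ :=
  stmt_5_general Γ hΓ γ hγ
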